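/- Let G = ([N],[M],E) be a bipartite multigraph with left degree D that is a (K,ε)-extractor, and let S be a subset of the left part with |S| = K. Call a right vertex 'bad' if it has more than 2DK/M edges to S (counted with multiplicity), and call an element of S 'bad' if at least half of its D edges lead to bad right vertices. Then the number of bad elements of S is at most 4εK. -/

import Mathlib

open Finset

/-- The bipartite multigraph represented by `G : Fin N → Fin D → Fin M` (each left vertex
has exactly `D` edges) is a `(K, ε)`-extractor: for every `A ⊆ [N]` with `|A| ≥ K` and
every `B ⊆ [M]`, `| |E(A,B)|/(|A|·D) − |B|/M | < ε`, where `E(A,B)` is the multiset of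
edges from `A` to `B`. -/
def IsGraphExtractor {N M D : ℕ} (K : ℕ) (ε : ℝ) (G : Fin N → Fin D → Fin M) : Prop :=
  ∀ A : Finset (Fin N), K ≤ A.card → ∀ B : Finset (Fin M),
    |((∑ a ∈ A, (Finset.univ.filter (fun j => G a j ∈ B)).card : ℕ) : ℝ) /
        ((A.card : ℝ) * D) - (B.card : ℝ) / M| < ε

/-- A right vertex `z` is bad for `S` if more than `2DK/M` edges (with multiplicity) lead
from `S` to `z`. -/
def BadRight {N M D : ℕ} (K : ℕ) (G : Fin N → Fin D → Fin M) (S : Finset (Fin N))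
    (z : Fin M) : Prop :=
  (2 * D * K : ℝ) / M < ((∑ b ∈ S, (Finset.univ.filter (fun j => G b j = z)).card : ℕ) : ℝ)

/-- Let `G` be a bipartite multigraph with left degree `D` that is a `(K,ε)`-extractor and
`S` a left set with `|S| = K`. If an element of `S` is called bad when at least half of
its `D` edges lead to bad right vertices, then `S` has at most `4εK` bad elements. -/
theorem few_bad_elements_half (N M K D : ℕ) (hM : 0 < M) (ε : ℝ)
    (G : Fin N → Fin D → Fin M) (hG : IsGraphExtractor K ε G)
    (S : Finset (Fin N)) (hS : S.card = K) :
    ((Set.ncard {a : Fin N | a ∈ S ∧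
        (D : ℝ) / 2 ≤ (Set.ncard {j : Fin D | BadRight K G S (G a j)} : ℝ)}) : ℝ)
      ≤ 4 * ε * K := by
  classical
  set P : Fin N → Prop := fun a =>
    (D : ℝ) / 2 ≤ (Set.ncard {j : Fin D | BadRight K G S (G a j)} : ℝ) with hP
  have hsetEq : {a : Fin N | a ∈ S ∧ P a} = ↑(S.filter P) := by
    ext a; simp [Finset.mem_filter]
  have hcard : (Set.ncard {a : Fin N | a ∈ S ∧ P a}) = (S.filter P).card := by
    rw [hsetEq, Set.ncard_coe_finset]
  show ((Set.ncard {a : Fin N | a ∈ S ∧ P a}) : ℝ) ≤ 4 * ε * K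
  rw [hcard]
  set Bs : Finset (Fin N) := S.filter P with hBs
  set T : Finset (Fin M) := Finset.univ.filter (fun z => BadRight K G S z) with hT
  have hMR : (0 : ℝ) < M := by exact_mod_cast hM
  -- ncard of bad directions equals a filter card
  have hnc : ∀ a : Fin N,
      (Set.ncard {j : Fin D | BadRight K G S (G a j)} : ℕ)
        = (Finset.univ.filter (fun j => G a j ∈ T)).card := by
    intro a
    have h1 : {j : Fin D | BadRight K G S (G a j)}
        = ↑(Finset.univ.filter (fun j => G a j ∈ T)) := by
      ext j; simp [hT]
    rw [h1, Set.ncard_coe_finset]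
  set e : ℕ := ∑ a ∈ S, (Finset.univ.filter (fun j => G a j ∈ T)).card with he
  by_cases hK0 : K = 0
  · -- S empty
    have hSe : S = ∅ := Finset.card_eq_zero.mp (by rw [hS, hK0])
    simp [hBs, hSe, hK0]
  have hKR : (0 : ℝ) < K := by
    exact_mod_cast Nat.pos_of_ne_zero hK0
  by_cases hD0 : D = 0
  · -- degenerate: then ε > 1
    have hext := hG S (le_of_eq hS.symm) Finset.univ
    have hsum0 : (∑ a ∈ S, (Finset.univ.filter (fun j => G a j ∈ (Finset.univ : Finset (Fin M)))).card) = 0 := by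
      subst hD0
      simp
    rw [hsum0] at hext
    have hone : (1 : ℝ) < ε := by
      have hMM : ((Finset.univ : Finset (Fin M)).card : ℝ) / M = 1 := by
        rw [Finset.card_univ, Fintype.card_fin]
        field_simp
      rw [hMM] at hext
      simpa using hext
    have hle : (Bs.card : ℝ) ≤ K := by
      have : Bs.card ≤ S.card := Finset.card_filter_le _ _
      rw [hS] at this
      exact_mod_cast this
    nlinarith
  have hDR : (0 : ℝ) < D := by
    exact_mod_cast Nat.pos_of_ne_zero hD0
  -- fiberwise decomposition
  have hfib : ∀ a : Fin N, (Finset.univ.filter (fun j => G a j ∈ T)).card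
      = ∑ z ∈ T, (Finset.univ.filter (fun j => G a j = z)).card := by
    intro a
    rw [Finset.card_eq_sum_card_fiberwise
      (s := Finset.univ.filter (fun j => G a j ∈ T)) (f := G a) (t := T) (fun j hj => (Finset.mem_filter.mp hj).2)]
    refine Finset.sum_congr rfl fun z hz => ?_
    congr 1
    ext j
    simp only [Finset.mem_filter, Finset.mem_univ, true_and]
    constructor
    · exact fun h => h.2
    · exact fun h => ⟨by rw [h]; exact hz, h⟩
  have heT : e = ∑ z ∈ T, ∑ a ∈ S, (Finset.univ.filter (fun j => G a j = z)).card := by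
    rw [he]
    rw [Finset.sum_congr rfl fun a _ => hfib a]
    exact Finset.sum_comm
  -- lower bound on e from badness of T
  have hlow : (T.card : ℝ) * ((2 * D * K : ℝ) / M) ≤ (e : ℝ) := by
    rw [heT]
    push_cast
    have := Finset.card_nsmul_le_sum T
      (fun z => ((∑ a ∈ S, (Finset.univ.filter (fun j => G a j = z)).card : ℕ) : ℝ))
      ((2 * D * K : ℝ) / M)
      (fun z hz => by
        have hbz : BadRight K G S z := (Finset.mem_filter.mp hz).2
        exact_mod_cast le_of_lt hbz)
    rw [nsmul_eq_mul] at this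
    exact_mod_cast this
  -- extractor bound
  have hext := hG S (le_of_eq hS.symm) T
  rw [hS] at hext
  have hext' : (e : ℝ) / ((K : ℝ) * D) - (T.card : ℝ) / M < ε ∧
      -(ε) < (e : ℝ) / ((K : ℝ) * D) - (T.card : ℝ) / M := abs_lt.mp hext |>.symm.imp id id
  obtain ⟨h1, _⟩ := hext'
  -- deduce T.card / M < ε
  have hKD : (0 : ℝ) < (K : ℝ) * D := by positivity
  have htM : (T.card : ℝ) / M < ε := by
    have h2 : (T.card : ℝ) * ((2 * D * K : ℝ) / M) / ((K : ℝ) * D)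
        = 2 * ((T.card : ℝ) / M) := by
      field_simp
    have h3 : 2 * ((T.card : ℝ) / M) ≤ (e : ℝ) / ((K : ℝ) * D) := by
      rw [← h2]
      gcongr
    linarith
  have heup : (e : ℝ) < 2 * ε * ((K : ℝ) * D) := by
    have : (e : ℝ) / ((K : ℝ) * D) < 2 * ε := by linarith
    calc (e : ℝ) = (e : ℝ) / ((K : ℝ) * D) * ((K : ℝ) * D) := by field_simp
    _ < 2 * ε * ((K : ℝ) * D) := by
        exact mul_lt_mul_of_pos_right this hKD
  -- lower bound on e from bad left vertices
  have hBsLow : (Bs.card : ℝ) * ((D : ℝ) / 2) ≤ (e : ℝ) := by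
    have hsub : Bs ⊆ S := Finset.filter_subset _ _
    have h4 : ∑ a ∈ Bs, ((Finset.univ.filter (fun j => G a j ∈ T)).card : ℝ) ≤ (e : ℝ) := by
      rw [he]
      push_cast
      exact Finset.sum_le_sum_of_subset_of_nonneg hsub (fun a _ _ => by positivity)
    have h5 := Finset.card_nsmul_le_sum Bs
      (fun a => ((Finset.univ.filter (fun j => G a j ∈ T)).card : ℝ))
      ((D : ℝ) / 2)
      (fun a ha => by
        have hpa : P a := (Finset.mem_filter.mp ha).2
        rw [hP] at hpa
        calc (D : ℝ) / 2 ≤ (Set.ncard {j : Fin D | BadRight K G S (G a j)} : ℝ) := hpa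
        _ = _ := by rw [hnc a])
    rw [nsmul_eq_mul] at h5
    linarith
  -- conclude
  have hfin : (Bs.card : ℝ) * ((D : ℝ) / 2) < 2 * ε * ((K : ℝ) * D) := lt_of_le_of_lt hBsLow heup
  nlinarith [hfin, hDR]
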